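/- Uniform bound on the second-level of discretized rough paths under Property (RIE): suppose X : [0,T] → ℝ^d satisfies Property (RIE) relative to p ∈ (2,3) and partitions (P^n), with control function w as in condition (iii). Define 𝕏^n_{s,t} = ∫_s^t (X^n_u − X^n_s) ⊗ dX^n_u (left-point Riemann–Stieltjes sum against the piecewise constant path X^n). Then there is a constant C depending only on p such that ‖𝕏^n‖_{p/2} ≤ C · w(0,T)^{2/p} for every n ∈ ℕ. -/

import Mathlib

open scoped ENNReal Classical
open Filter MeasureTheory ProbabilityTheory

noncomputable section

/-- The `p`-variation of a path `X` over `[0,T]`, as an extended nonnegative real: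
`(sup over partitions of Σ ‖increment‖^p)^(1/p)`. -/
def epVar {E : Type*} [NormedAddCommGroup E] (X : ℝ → E) (p T : ℝ) : ℝ≥0∞ :=
  (⨆ (n : ℕ) (t : ℕ → ℝ) (_ : Monotone t) (_ : t 0 = 0) (_ : t n = T),
    ∑ i ∈ Finset.range n, ENNReal.ofReal (‖X (t (i + 1)) - X (t i)‖ ^ p)) ^ (1 / p)

/-- The `r`-variation of a two-parameter function `A` over `[0,T]`. -/
def epVar2 {E : Type*} [NormedAddCommGroup E] (A : ℝ → ℝ → E) (r T : ℝ) : ℝ≥0∞ :=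
  (⨆ (n : ℕ) (t : ℕ → ℝ) (_ : Monotone t) (_ : t 0 = 0) (_ : t n = T),
    ∑ i ∈ Finset.range n, ENNReal.ofReal (‖A (t i) (t (i + 1))‖ ^ r)) ^ (1 / r)

/-- Piecewise constant approximation of `X` along the partition `t 0 ≤ t 1 ≤ ... ≤ t N`. -/
def pcApprox {E : Type*} (X : ℝ → E) (N : ℕ) (t : ℕ → ℝ) (s : ℝ) : E :=
  X (t (Nat.findGreatest (fun k => t k ≤ s) N))

/-- Tensor (outer) product of two Euclidean vectors, with the Frobenius (Euclidean) norm. -/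
def tp2 {d e : ℕ} (v : EuclideanSpace ℝ (Fin d)) (w : EuclideanSpace ℝ (Fin e)) :
    EuclideanSpace ℝ (Fin d × Fin e) :=
  (WithLp.equiv 2 (Fin d × Fin e → ℝ)).symm (fun q => v q.1 * w q.2)

def tp {d : ℕ} (v w : EuclideanSpace ℝ (Fin d)) : EuclideanSpace ℝ (Fin d × Fin d) :=
  tp2 v w

/-- Clamping of `x` into the interval `[s,u]`. -/
def clamp (s u x : ℝ) : ℝ := max s (min x u)

/-- The second-level lift `𝕏ⁿ_{s,u} = ∫_s^u (Xⁿ_r − Xⁿ_s) ⊗ dXⁿ_r` of a path `Xn` which is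
piecewise constant along the partition `t`, written as a left-point Riemann-Stieltjes sum. -/
def pcLift {d : ℕ} (N : ℕ) (Xn : ℝ → EuclideanSpace ℝ (Fin d)) (t : ℕ → ℝ) (s u : ℝ) :
    EuclideanSpace ℝ (Fin d × Fin d) :=
  ∑ i ∈ Finset.range N,
    tp (Xn (clamp s u (t i)) - Xn s) (Xn (clamp s u (t (i + 1))) - Xn (clamp s u (t i)))

/-- The left-point Riemann sum `∫_0^u Xⁿ_r ⊗ dX_r = Σ_k X_{t_k} ⊗ (X_{t_{k+1}∧u} − X_{t_k∧u})`. -/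
def riemannSum {d : ℕ} (N : ℕ) (X : ℝ → EuclideanSpace ℝ (Fin d)) (t : ℕ → ℝ) (u : ℝ) :
    EuclideanSpace ℝ (Fin d × Fin d) :=
  ∑ k ∈ Finset.range N, tp (X (t k)) (X (min (t (k + 1)) u) - X (min (t k) u))

/-- The left-point Riemann sum `∫_s^u Xⁿ_{s,r} ⊗ dX_r`. -/
def mixedInt {d : ℕ} (N : ℕ) (X : ℝ → EuclideanSpace ℝ (Fin d)) (t : ℕ → ℝ) (s u : ℝ) :
    EuclideanSpace ℝ (Fin d × Fin d) :=
  ∑ i ∈ Finset.range N,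
    tp (pcApprox X N t (clamp s u (t i)) - pcApprox X N t s)
      (X (clamp s u (t (i + 1))) - X (clamp s u (t i)))

/-- A control function on the simplex `Δ_T`: nonnegative and superadditive. -/
def IsControl (T : ℝ) (w : ℝ → ℝ → ℝ) : Prop :=
  (∀ s t, 0 ≤ s → s ≤ t → t ≤ T → 0 ≤ w s t) ∧
  (∀ s u t, 0 ≤ s → s ≤ u → u ≤ t → t ≤ T → w s u + w u t ≤ w s t)

/-- Property (RIE) for a path `X` relative to `p ∈ (2,3)` and a sequence of partitions
`t n 0 ≤ ... ≤ t n (N n)` of `[0,T]` with vanishing mesh. -/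
structure PropertyRIE {d : ℕ} (p T : ℝ) (X : ℝ → EuclideanSpace ℝ (Fin d))
    (N : ℕ → ℕ) (t : ℕ → ℕ → ℝ) : Prop where
  mono : ∀ n, Monotone (t n)
  zero : ∀ n, t n 0 = 0
  top : ∀ n, t n (N n) = T
  mesh : ∀ ε > 0, ∃ m, ∀ n ≥ m, ∀ i < N n, t n (i + 1) - t n i < ε
  unif : TendstoUniformlyOn (fun n s => pcApprox X (N n) (t n) s) X atTop (Set.Icc 0 T)
  riemann : ∃ I : ℝ → EuclideanSpace ℝ (Fin d × Fin d),
    TendstoUniformlyOn (fun n u => riemannSum (N n) X (t n) u) I atTop (Set.Icc 0 T)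
  control : ∃ w : ℝ → ℝ → ℝ, IsControl T w ∧
    (∀ s u, 0 ≤ s → s ≤ u → u ≤ T → ‖X u - X s‖ ^ p ≤ w s u) ∧
    (∀ n, ∀ k ℓ : ℕ, k < ℓ → ℓ ≤ N n →
      ‖riemannSum (N n) X (t n) (t n ℓ) - riemannSum (N n) X (t n) (t n k) -
          tp (X (t n k)) (X (t n ℓ) - X (t n k))‖ ^ (p / 2) ≤ w (t n k) (t n ℓ))

/-! For `s ≤ u` with `t_k ≤ s < t_{k+1}` and `t_ℓ ≤ u < t_{ℓ+1}`, the lift `𝕏ⁿ_{s,u}` is the sum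
`Σ_{k<i<ℓ} X_{t_k,t_i} ⊗ X_{t_i,t_{i+1}}`. Splitting off the first step writes it as the
Riemann-sum remainder of condition (iii) on `[t_{k+1}, t_ℓ]` plus `X_{t_k,t_{k+1}} ⊗ X_{t_{k+1},t_ℓ}`;
each has norm at most `w(t_k,t_ℓ)^{2/p}`. Hence `‖𝕏ⁿ_{s,u}‖^{p/2} ≤ 2^{p/2} w(t_k,t_ℓ)`, and since the
right-hand side is again a control in `(s,u)`, superadditivity bounds the sum over any partition
of `[0,T]` by `2^{p/2} w(0,T)`, giving `C = 2`. -/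

section TensorProduct

variable {d : ℕ}

lemma tp_apply (v w : EuclideanSpace ℝ (Fin d)) (q : Fin d × Fin d) :
    tp v w q = v q.1 * w q.2 := rfl

lemma tp_zero_left (w : EuclideanSpace ℝ (Fin d)) : tp 0 w = 0 := by
  ext q; simp [tp_apply]

lemma tp_zero_right (v : EuclideanSpace ℝ (Fin d)) : tp v 0 = 0 := by
  ext q; simp [tp_apply]

lemma tp_sub_left (a b c : EuclideanSpace ℝ (Fin d)) : tp (a - b) c = tp a c - tp b c := by
  ext q; simp [tp_apply, sub_mul]

lemma tp_add_right (a b c : EuclideanSpace ℝ (Fin d)) : tp a (b + c) = tp a b + tp a c := by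
  ext q; simp [tp_apply, mul_add]

lemma tp_sum_right {ι : Type*} (s : Finset ι) (a : EuclideanSpace ℝ (Fin d))
    (g : ι → EuclideanSpace ℝ (Fin d)) : tp a (∑ i ∈ s, g i) = ∑ i ∈ s, tp a (g i) :=
  map_sum (AddMonoidHom.mk' (tp a) (tp_add_right a)) g s

lemma norm_tp (v w : EuclideanSpace ℝ (Fin d)) : ‖tp v w‖ = ‖v‖ * ‖w‖ := by
  rw [EuclideanSpace.norm_eq, EuclideanSpace.norm_eq, EuclideanSpace.norm_eq,
    ← Real.sqrt_mul (by positivity), Fintype.sum_prod_type, Finset.sum_mul_sum]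
  simp [tp_apply, mul_pow]

end TensorProduct

section IsControl

variable {T : ℝ} {w : ℝ → ℝ → ℝ}

lemma IsControl.nonneg (hw : IsControl T w) {s u : ℝ} (hs : 0 ≤ s) (hsu : s ≤ u) (hu : u ≤ T) :
    0 ≤ w s u :=
  hw.1 s u hs hsu hu

lemma IsControl.add_le (hw : IsControl T w) {s u v : ℝ} (hs : 0 ≤ s) (hsu : s ≤ u) (huv : u ≤ v)
    (hv : v ≤ T) : w s u + w u v ≤ w s v :=
  hw.2 s u v hs hsu huv hv

lemma IsControl.mono (hw : IsControl T w) {s s' u' u : ℝ} (hs : 0 ≤ s) (hss' : s ≤ s')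
    (hs'u' : s' ≤ u') (hu'u : u' ≤ u) (hu : u ≤ T) : w s' u' ≤ w s u := by
  have h₁ := hw.add_le hs hss' (hs'u'.trans hu'u) hu
  have h₂ := hw.add_le (hs.trans hss') hs'u' hu'u hu
  have h₃ := hw.nonneg hs hss' ((hs'u'.trans hu'u).trans hu)
  have h₄ := hw.nonneg ((hs.trans hss').trans hs'u') hu'u hu
  linarith

lemma IsControl.sum_le (hw : IsControl T w) {σ : ℕ → ℝ} (hσ : Monotone σ) (h0 : 0 ≤ σ 0)
    {m : ℕ} (hm : σ m ≤ T) : ∑ j ∈ Finset.range m, w (σ j) (σ (j + 1)) ≤ w (σ 0) (σ m) := by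
  induction m with
  | zero => simpa using hw.nonneg h0 le_rfl hm
  | succ m ih =>
    have hmT : σ m ≤ T := (hσ m.le_succ).trans hm
    rw [Finset.sum_range_succ]
    linarith [ih hmT, hw.add_le h0 (hσ m.zero_le) (hσ m.le_succ) hm]

lemma IsControl.const_mul (hw : IsControl T w) {c : ℝ} (hc : 0 ≤ c) :
    IsControl T (fun s u => c * w s u) :=
  ⟨fun s u hs hsu hu => mul_nonneg hc (hw.nonneg hs hsu hu),
    fun s u v hs hsu huv hv => by
      rw [← mul_add]; exact mul_le_mul_of_nonneg_left (hw.add_le hs hsu huv hv) hc⟩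

lemma IsControl.comp {S : ℝ} (hw : IsControl T w) {f : ℝ → ℝ}
    (hf : MonotoneOn f (Set.Icc 0 S)) (hmaps : Set.MapsTo f (Set.Icc 0 S) (Set.Icc 0 T)) :
    IsControl S (fun s u => w (f s) (f u)) := by
  have mem : ∀ {s u}, 0 ≤ s → s ≤ u → u ≤ S → s ∈ Set.Icc 0 S ∧ u ∈ Set.Icc 0 S :=
    fun hs hsu hu => ⟨⟨hs, hsu.trans hu⟩, ⟨hs.trans hsu, hu⟩⟩
  refine ⟨fun s u hs hsu hu => ?_, fun s u v hs hsu huv hv => ?_⟩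
  · obtain ⟨hs', hu'⟩ := mem hs hsu hu
    exact hw.nonneg (hmaps hs').1 (hf hs' hu' hsu) (hmaps hu').2
  · obtain ⟨hs', hu'⟩ := mem hs hsu (huv.trans hv)
    obtain ⟨-, hv'⟩ := mem (hs.trans hsu) huv hv
    exact hw.add_le (hmaps hs').1 (hf hs' hu' hsu) (hf hu' hv' huv) (hmaps hv').2

end IsControl

lemma epVar2_le_of_control {E : Type*} [NormedAddCommGroup E] {A : ℝ → ℝ → E} {r T : ℝ}
    {ω : ℝ → ℝ → ℝ} (hr : 0 < r) (hT : 0 ≤ T) (hω : IsControl T ω)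
    (hA : ∀ s u, 0 ≤ s → s ≤ u → u ≤ T → ‖A s u‖ ^ r ≤ ω s u) :
    epVar2 A r T ≤ ENNReal.ofReal (ω 0 T ^ (1 / r)) := by
  have hsup : (⨆ (m : ℕ) (σ : ℕ → ℝ) (_ : Monotone σ) (_ : σ 0 = 0) (_ : σ m = T),
      ∑ j ∈ Finset.range m, ENNReal.ofReal (‖A (σ j) (σ (j + 1))‖ ^ r)) ≤
        ENNReal.ofReal (ω 0 T) := by
    refine iSup_le fun m => iSup_le fun σ => iSup_le fun hσ => iSup_le fun h0 =>
      iSup_le fun hm => ?_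
    have hσ0 : ∀ j, 0 ≤ σ j := fun j => h0 ▸ hσ j.zero_le
    rw [← ENNReal.ofReal_sum_of_nonneg fun j _ => by positivity]
    refine ENNReal.ofReal_le_ofReal ?_
    calc ∑ j ∈ Finset.range m, ‖A (σ j) (σ (j + 1))‖ ^ r
        ≤ ∑ j ∈ Finset.range m, ω (σ j) (σ (j + 1)) :=
          Finset.sum_le_sum fun j hj => hA _ _ (hσ0 j) (hσ j.le_succ)
            (hm ▸ hσ (Finset.mem_range.mp hj))
      _ ≤ ω 0 T := by simpa [h0, hm] using hω.sum_le hσ (hσ0 0) hm.le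
  calc epVar2 A r T ≤ ENNReal.ofReal (ω 0 T) ^ (1 / r) :=
        ENNReal.rpow_le_rpow hsup (by positivity)
    _ = ENNReal.ofReal (ω 0 T ^ (1 / r)) :=
        ENNReal.ofReal_rpow_of_nonneg (hω.nonneg le_rfl hT le_rfl) (by positivity)

section PartitionIndex

variable {τ : ℕ → ℝ} {M : ℕ}

def lastIndex (τ : ℕ → ℝ) (M : ℕ) (s : ℝ) : ℕ :=
  Nat.findGreatest (fun k => τ k ≤ s) M

lemma pcApprox_eq {E : Type*} (X : ℝ → E) (s : ℝ) :
    pcApprox X M τ s = X (τ (lastIndex τ M s)) := rfl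

lemma lastIndex_le (s : ℝ) : lastIndex τ M s ≤ M :=
  Nat.findGreatest_le M

lemma apply_lastIndex_le {s : ℝ} (hs : τ 0 ≤ s) : τ (lastIndex τ M s) ≤ s :=
  Nat.findGreatest_spec (P := fun k => τ k ≤ s) M.zero_le hs

lemma lt_apply_of_lastIndex_lt {s : ℝ} {j : ℕ} (hj : lastIndex τ M s < j) (hjM : j ≤ M) :
    s < τ j :=
  lt_of_not_ge (Nat.findGreatest_is_greatest hj hjM)

lemma lastIndex_mono : Monotone (lastIndex τ M) :=
  fun _ _ hsu => Nat.findGreatest_mono (fun _ hk => hk.trans hsu) le_rfl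

lemma apply_lastIndex_apply (hτ : Monotone τ) {j : ℕ} (hj : j ≤ M) :
    τ (lastIndex τ M (τ j)) = τ j :=
  le_antisymm (apply_lastIndex_le (hτ j.zero_le)) (hτ (Nat.le_findGreatest hj le_rfl))

/-- Clamping to `[s, u]` in time is clamping to `[lastIndex s, lastIndex u]` in the index. -/
lemma pcApprox_clamp {E : Type*} (X : ℝ → E) (hτ : Monotone τ) {s u : ℝ} (hs : τ 0 ≤ s)
    (hsu : s ≤ u) {i : ℕ} (hiM : i ≤ M) :
    pcApprox X M τ (clamp s u (τ i)) =
      X (τ (max (lastIndex τ M s) (min i (lastIndex τ M u)))) := by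
  set k := lastIndex τ M s
  set ℓ := lastIndex τ M u
  have hkℓ : k ≤ ℓ := lastIndex_mono hsu
  rcases le_or_gt i k with hik | hki
  · have hτi : τ i ≤ s := (hτ hik).trans (apply_lastIndex_le hs)
    rw [clamp, max_eq_left ((min_le_left _ _).trans hτi), show max k (min i ℓ) = k by omega]
    rfl
  rcases le_or_gt i ℓ with hiℓ | hℓi
  · have hτi : τ i ≤ u := (hτ hiℓ).trans (apply_lastIndex_le (hs.trans hsu))
    rw [clamp, min_eq_left hτi, max_eq_right (lt_apply_of_lastIndex_lt hki hiM).le,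
      show max k (min i ℓ) = i by omega, pcApprox_eq, apply_lastIndex_apply hτ hiM]
  · rw [clamp, min_eq_right (lt_apply_of_lastIndex_lt hℓi hiM).le, max_eq_right hsu,
      show max k (min i ℓ) = ℓ by omega]
    rfl

end PartitionIndex

section DiscreteSums

variable {d : ℕ}

lemma sum_range_tp_clamp (y : ℕ → EuclideanSpace ℝ (Fin d)) {k ℓ M : ℕ} (hkℓ : k ≤ ℓ)
    (hℓM : ℓ ≤ M) :
    ∑ i ∈ Finset.range M, tp (y (max k (min i ℓ)) - y k)
        (y (max k (min (i + 1) ℓ)) - y (max k (min i ℓ))) =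
      ∑ i ∈ Finset.Ioo k ℓ, tp (y i - y k) (y (i + 1) - y i) := by
  symm
  calc ∑ i ∈ Finset.Ioo k ℓ, tp (y i - y k) (y (i + 1) - y i)
      = ∑ i ∈ Finset.Ioo k ℓ, tp (y (max k (min i ℓ)) - y k)
          (y (max k (min (i + 1) ℓ)) - y (max k (min i ℓ))) := by
        refine Finset.sum_congr rfl fun i hi => ?_
        obtain ⟨hki, hiℓ⟩ := Finset.mem_Ioo.mp hi
        rw [show max k (min i ℓ) = i by omega, show max k (min (i + 1) ℓ) = i + 1 by omega]
    _ = _ := by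
        refine Finset.sum_subset (fun i hi => Finset.mem_range.mpr ?_) fun i _ hi => ?_
        · exact (Finset.mem_Ioo.mp hi).2.trans_le hℓM
        rw [Finset.mem_Ioo, not_and_or, not_lt, not_lt] at hi
        rcases hi with hik | hℓi
        · rw [show max k (min i ℓ) = k by omega, sub_self, tp_zero_left]
        · rw [show max k (min i ℓ) = ℓ by omega, show max k (min (i + 1) ℓ) = ℓ by omega,
            sub_self, tp_zero_right]

lemma sum_Ioo_tp_eq (y : ℕ → EuclideanSpace ℝ (Fin d)) {k ℓ : ℕ} (hkℓ : k < ℓ) :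
    ∑ i ∈ Finset.Ioo k ℓ, tp (y i - y k) (y (i + 1) - y i) =
      (∑ i ∈ Finset.Ico (k + 1) ℓ, tp (y i) (y (i + 1) - y i) - tp (y (k + 1)) (y ℓ - y (k + 1)))
        + tp (y (k + 1) - y k) (y ℓ - y (k + 1)) := by
  simp only [← Finset.Ico_add_one_left_eq_Ioo, tp_sub_left]
  rw [Finset.sum_sub_distrib, ← tp_sum_right, Finset.sum_Ico_sub y (show k + 1 ≤ ℓ from hkℓ)]
  abel

end DiscreteSums

section PiecewiseConstant

variable {d : ℕ} {X : ℝ → EuclideanSpace ℝ (Fin d)} {M : ℕ} {τ : ℕ → ℝ}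

lemma riemannSum_apply (hτ : Monotone τ) {b : ℕ} (hbM : b ≤ M) :
    riemannSum M X τ (τ b) = ∑ i ∈ Finset.range b, tp (X (τ i)) (X (τ (i + 1)) - X (τ i)) := by
  simp only [riemannSum, ← hτ.map_min]
  symm
  calc ∑ i ∈ Finset.range b, tp (X (τ i)) (X (τ (i + 1)) - X (τ i))
      = ∑ i ∈ Finset.range b, tp (X (τ i)) (X (τ (min (i + 1) b)) - X (τ (min i b))) := by
        refine Finset.sum_congr rfl fun i hi => ?_
        have hib := Finset.mem_range.mp hi
        rw [show min (i + 1) b = i + 1 by omega, show min i b = i by omega]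
    _ = _ := by
        refine Finset.sum_subset (Finset.range_subset_range.mpr hbM) fun i _ hi => ?_
        have hbi := not_lt.mp (Finset.mem_range.not.mp hi)
        rw [show min (i + 1) b = b by omega, show min i b = b by omega, sub_self, tp_zero_right]

lemma riemannSum_sub_riemannSum (hτ : Monotone τ) {a b : ℕ} (hab : a ≤ b) (hbM : b ≤ M) :
    riemannSum M X τ (τ b) - riemannSum M X τ (τ a) =
      ∑ i ∈ Finset.Ico a b, tp (X (τ i)) (X (τ (i + 1)) - X (τ i)) := by
  rw [riemannSum_apply hτ hbM, riemannSum_apply hτ (hab.trans hbM), Finset.sum_Ico_eq_sub _ hab]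

lemma pcLift_pcApprox (hτ : Monotone τ) {s u : ℝ} (hs : τ 0 ≤ s) (hsu : s ≤ u) :
    pcLift M (pcApprox X M τ) τ s u =
      ∑ i ∈ Finset.Ioo (lastIndex τ M s) (lastIndex τ M u),
        tp (X (τ i) - X (τ (lastIndex τ M s))) (X (τ (i + 1)) - X (τ i)) := by
  rw [← sum_range_tp_clamp (fun i => X (τ i)) (lastIndex_mono hsu) (lastIndex_le u)]
  refine Finset.sum_congr rfl fun i hi => ?_
  have hiM := Finset.mem_range.mp hi
  rw [pcApprox_clamp X hτ hs hsu hiM.le, pcApprox_clamp X hτ hs hsu hiM, pcApprox_eq X s]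

end PiecewiseConstant

section Estimates

variable {p T : ℝ} {d : ℕ} {X : ℝ → EuclideanSpace ℝ (Fin d)} {M : ℕ} {τ : ℕ → ℝ}
  {w : ℝ → ℝ → ℝ}

lemma norm_sum_Ioo_tp_le (hp : 0 < p) (hτ : Monotone τ) (hτ0 : 0 ≤ τ 0) (hτM : τ M ≤ T)
    (hw : IsControl T w) (hX : ∀ s u, 0 ≤ s → s ≤ u → u ≤ T → ‖X u - X s‖ ^ p ≤ w s u)
    (hR : ∀ k ℓ : ℕ, k < ℓ → ℓ ≤ M →
      ‖riemannSum M X τ (τ ℓ) - riemannSum M X τ (τ k) -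
        tp (X (τ k)) (X (τ ℓ) - X (τ k))‖ ^ (p / 2) ≤ w (τ k) (τ ℓ))
    {k ℓ : ℕ} (hkℓ : k ≤ ℓ) (hℓM : ℓ ≤ M) :
    ‖∑ i ∈ Finset.Ioo k ℓ, tp (X (τ i) - X (τ k)) (X (τ (i + 1)) - X (τ i))‖ ≤
      2 * w (τ k) (τ ℓ) ^ (2 / p) := by
  set W := w (τ k) (τ ℓ)
  have hk0 : 0 ≤ τ k := hτ0.trans (hτ k.zero_le)
  have hℓT : τ ℓ ≤ T := (hτ hℓM).trans hτM
  have hW : 0 ≤ W := hw.nonneg hk0 (hτ hkℓ) hℓT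
  rcases lt_or_ge (k + 1) ℓ with hk1ℓ | hℓk1
  swap
  · rw [← Finset.Ico_add_one_left_eq_Ioo, Finset.Ico_eq_empty (by omega), Finset.sum_empty,
      norm_zero]
    positivity
  have hkk1 : τ k ≤ τ (k + 1) := hτ k.le_succ
  have hk1ℓ' : τ (k + 1) ≤ τ ℓ := hτ hk1ℓ.le
  have root : ∀ {a b q : ℝ}, 0 ≤ a → 0 < q → a ^ q ≤ b → b ≤ W → a ≤ W ^ q⁻¹ :=
    fun ha hq hab hbW => (Real.le_rpow_inv_iff_of_pos ha hW hq).2 (hab.trans hbW)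
  have hfirst : ‖X (τ (k + 1)) - X (τ k)‖ ≤ W ^ p⁻¹ :=
    root (norm_nonneg _) hp (hX _ _ hk0 hkk1 (hk1ℓ'.trans hℓT))
      (hw.mono hk0 le_rfl hkk1 hk1ℓ' hℓT)
  have hrest : ‖X (τ ℓ) - X (τ (k + 1))‖ ≤ W ^ p⁻¹ :=
    root (norm_nonneg _) hp (hX _ _ (hk0.trans hkk1) hk1ℓ' hℓT)
      (hw.mono hk0 hkk1 hk1ℓ' le_rfl hℓT)
  have hremainder : ‖riemannSum M X τ (τ ℓ) - riemannSum M X τ (τ (k + 1)) -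
      tp (X (τ (k + 1))) (X (τ ℓ) - X (τ (k + 1)))‖ ≤ W ^ (p / 2)⁻¹ :=
    root (norm_nonneg _) (by positivity) (hR _ _ hk1ℓ hℓM) (hw.mono hk0 hkk1 hk1ℓ' le_rfl hℓT)
  rw [riemannSum_sub_riemannSum hτ hk1ℓ.le hℓM] at hremainder
  rw [sum_Ioo_tp_eq _ (k.lt_succ_self.trans hk1ℓ)]
  calc _ ≤ _ + ‖X (τ (k + 1)) - X (τ k)‖ * ‖X (τ ℓ) - X (τ (k + 1))‖ :=
        (norm_add_le _ _).trans_eq (by rw [norm_tp])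
    _ ≤ W ^ (p / 2)⁻¹ + W ^ p⁻¹ * W ^ p⁻¹ := by gcongr
    _ = 2 * W ^ (2 / p) := by
        rw [← Real.rpow_add' hW (by positivity), inv_div, show p⁻¹ + p⁻¹ = 2 / p by ring]
        ring

lemma norm_pcLift_pcApprox_rpow_le (hp : 0 < p) (hτ : Monotone τ) (hτ0 : 0 ≤ τ 0)
    (hτM : τ M ≤ T) (hw : IsControl T w)
    (hX : ∀ s u, 0 ≤ s → s ≤ u → u ≤ T → ‖X u - X s‖ ^ p ≤ w s u)
    (hR : ∀ k ℓ : ℕ, k < ℓ → ℓ ≤ M →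
      ‖riemannSum M X τ (τ ℓ) - riemannSum M X τ (τ k) -
        tp (X (τ k)) (X (τ ℓ) - X (τ k))‖ ^ (p / 2) ≤ w (τ k) (τ ℓ))
    {s u : ℝ} (hs : τ 0 ≤ s) (hsu : s ≤ u) :
    ‖pcLift M (pcApprox X M τ) τ s u‖ ^ (p / 2) ≤
      2 ^ (p / 2) * w (τ (lastIndex τ M s)) (τ (lastIndex τ M u)) := by
  have hkℓ : lastIndex τ M s ≤ lastIndex τ M u := lastIndex_mono hsu
  have hW : 0 ≤ w (τ (lastIndex τ M s)) (τ (lastIndex τ M u)) :=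
    hw.nonneg (hτ0.trans (hτ (Nat.zero_le _))) (hτ hkℓ) ((hτ (lastIndex_le u)).trans hτM)
  rw [pcLift_pcApprox hτ hs hsu]
  calc _ ≤ (2 * w (τ (lastIndex τ M s)) (τ (lastIndex τ M u)) ^ (2 / p)) ^ (p / 2) :=
        Real.rpow_le_rpow (norm_nonneg _)
          (norm_sum_Ioo_tp_le hp hτ hτ0 hτM hw hX hR hkℓ (lastIndex_le u)) (by positivity)
    _ = _ := by
        rw [Real.mul_rpow zero_le_two (by positivity), ← inv_div p 2,
          Real.rpow_inv_rpow hW (by positivity)]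

end Estimates

theorem pcLift_pvar_bound_general (p : ℝ) (hp2 : 2 < p) :
    ∃ C : ℝ, 0 < C ∧
      ∀ (d : ℕ) (T : ℝ) (X : ℝ → EuclideanSpace ℝ (Fin d)) (N : ℕ → ℕ) (t : ℕ → ℕ → ℝ)
        (w : ℝ → ℝ → ℝ), 0 < T →
        PropertyRIE p T X N t →
        IsControl T w →
        (∀ s u, 0 ≤ s → s ≤ u → u ≤ T → ‖X u - X s‖ ^ p ≤ w s u) →
        (∀ n, ∀ k ℓ : ℕ, k < ℓ → ℓ ≤ N n →
          ‖riemannSum (N n) X (t n) (t n ℓ) - riemannSum (N n) X (t n) (t n k) -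
              tp (X (t n k)) (X (t n ℓ) - X (t n k))‖ ^ (p / 2) ≤ w (t n k) (t n ℓ)) →
        ∀ n, epVar2 (fun s u => pcLift (N n) (pcApprox X (N n) (t n)) (t n) s u) (p / 2) T ≤
          ENNReal.ofReal (C * w 0 T ^ (2 / p)) := by
  have hp : 0 < p := by linarith
  refine ⟨2, two_pos, fun d T X N t w hT hRIE hw hX hR n => ?_⟩
  have hτ := hRIE.mono n
  have hτ0 := hRIE.zero n
  have hτM := hRIE.top n
  set a : ℝ → ℝ := fun s => t n (lastIndex (t n) (N n) s)
  have ha : Monotone a := hτ.comp lastIndex_mono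
  have ha0 : a 0 = 0 := by simpa only [hτ0] using apply_lastIndex_apply hτ (Nat.zero_le (N n))
  have haT : a T = T := by simpa only [hτM] using apply_lastIndex_apply hτ (le_refl (N n))
  have haI : Set.MapsTo a (Set.Icc 0 T) (Set.Icc 0 T) := fun s hs =>
    ⟨ha0 ▸ ha hs.1, haT ▸ ha hs.2⟩
  have hω : IsControl T (fun s u => 2 ^ (p / 2) * w (a s) (a u)) :=
    (hw.comp (ha.monotoneOn _) haI).const_mul (by positivity)
  calc _ ≤ ENNReal.ofReal ((2 ^ (p / 2) * w (a 0) (a T)) ^ (1 / (p / 2))) :=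
        epVar2_le_of_control (by positivity) hT.le hω fun s u hs hsu _ =>
          norm_pcLift_pcApprox_rpow_le hp hτ hτ0.ge hτM.le hw hX (hR n) (hτ0 ▸ hs) hsu
    _ = _ := by
        rw [ha0, haT, one_div_div, ← inv_div p 2, Real.mul_rpow (by positivity)
          (hw.nonneg le_rfl hT.le le_rfl), Real.rpow_rpow_inv zero_le_two (by positivity)]

/-- under Property (RIE) with control function `w`, the second-level lifts
`𝕏ⁿ` of the discretized paths satisfy `‖𝕏ⁿ‖_{p/2} ≤ C w(0,T)^{2/p}` uniformly in `n`, with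
`C` depending only on `p`. -/
theorem pcLift_pvar_bound (p : ℝ) (hp2 : 2 < p) (hp3 : p < 3) :
    ∃ C : ℝ, 0 < C ∧
      ∀ (d : ℕ) (T : ℝ) (X : ℝ → EuclideanSpace ℝ (Fin d)) (N : ℕ → ℕ) (t : ℕ → ℕ → ℝ)
        (w : ℝ → ℝ → ℝ), 0 < T →
        PropertyRIE p T X N t →
        IsControl T w →
        (∀ s u, 0 ≤ s → s ≤ u → u ≤ T → ‖X u - X s‖ ^ p ≤ w s u) →
        (∀ n, ∀ k ℓ : ℕ, k < ℓ → ℓ ≤ N n →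
          ‖riemannSum (N n) X (t n) (t n ℓ) - riemannSum (N n) X (t n) (t n k) -
              tp (X (t n k)) (X (t n ℓ) - X (t n k))‖ ^ (p / 2) ≤ w (t n k) (t n ℓ)) →
        ∀ n, epVar2 (fun s u => pcLift (N n) (pcApprox X (N n) (t n)) (t n) s u) (p / 2) T ≤
          ENNReal.ofReal (C * w 0 T ^ (2 / p)) :=
  pcLift_pvar_bound_general p hp2
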